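/- Let f₁, …, f_N : ℝ^d → ℝ be differentiable, each with L-Lipschitz gradient, set f = (1/N) Σ_{i=1}^N f_i, and assume ∇f is L-Lipschitz. Let 0 < ε, G ≥ 0, β₁ ∈ [0,1), γ ≥ 0, ρ ≥ 0, λ₁, λ₂, λ₃ > 0. Let x, s, m, η, η₀ ∈ ℝ^d with s ≠ 0, ∇f(x) ≠ 0, ‖m‖∞ ≤ G, and 0 ≤ (η)_j ≤ 1/ε and 0 ≤ (η₀)_j ≤ 1/ε for every coordinate j, and set z = x − (γ β₁/(1 − β₁)) m ⊙ η₀. Then ⟨∇f(z) − ∇f(x), −(γ/N) Σ_{i=1}^N ∇f_i(x + ρ s/‖s‖) ⊙ η⟩ ≤ (γ³ L² β₁²/(2ε(1 − β₁)²)) (1/λ₁² + 1/λ₂² + 1/λ₃²) (d G²/ε²) + (γ λ₁²/2) ‖∇f(x) ⊙ √η‖² + (γ L² ρ²/(2ε)) (λ₂² + 4 λ₃²). -/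

import Mathlib

/-!
Because `f` is the average of the `fᵢ`, the averaged perturbed gradient is `∇f(y)` with
`y = x + ρ s/‖s‖`. Writing `∇f(y) = ∇f(x) + (∇f(y) − ∇f(x))` and moving `√η` to both sides of
each inner product, Young's inequality with weights `λ₁`, `λ₂` bounds the cross term by
`η`-weighted squared norms. These are at most `1/ε` times the plain ones, and the Lipschitz bound
turns `‖∇f(z) − ∇f(x)‖²` and `‖∇f(y) − ∇f(x)‖²` into `L²‖z − x‖² ≤ L²(γβ₁/(1−β₁))² d G²/ε²`
and `L²‖y − x‖² ≤ L²ρ²`. The `λ₃` terms are nonnegative slack.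
-/

open scoped RealInnerProductSpace

/-- The coordinatewise (Hadamard) product on `EuclideanSpace ℝ (Fin d)`. -/
noncomputable def had {d : ℕ} (x y : EuclideanSpace ℝ (Fin d)) : EuclideanSpace ℝ (Fin d) :=
  (WithLp.equiv 2 (Fin d → ℝ)).symm (fun j => x j * y j)

/-- The coordinatewise square root on `EuclideanSpace ℝ (Fin d)`. -/
noncomputable def vsqrt {d : ℕ} (x : EuclideanSpace ℝ (Fin d)) : EuclideanSpace ℝ (Fin d) :=
  (WithLp.equiv 2 (Fin d → ℝ)).symm (fun j => Real.sqrt (x j))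

theorem gradient_const_mul_sum {E ι : Type*} [NormedAddCommGroup E] [InnerProductSpace ℝ E]
    [CompleteSpace E] (s : Finset ι) {F : ι → E → ℝ} {u : E}
    (hF : ∀ i ∈ s, DifferentiableAt ℝ (F i) u) (c : ℝ) :
    gradient (fun y => c * ∑ i ∈ s, F i y) u = c • ∑ i ∈ s, gradient (F i) u := by
  refine HasGradientAt.gradient ?_
  rw [hasGradientAt_iff_hasFDerivAt, map_smul, map_sum]
  refine (HasFDerivAt.fun_sum fun i hi => ?_).const_mul c
  exact hasGradientAt_iff_hasFDerivAt.mp (hF i hi).hasGradientAt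

theorem norm_div_norm_smul_le {F : Type*} [NormedAddCommGroup F] [NormedSpace ℝ F]
    (ρ : ℝ) (s : F) : ‖(ρ / ‖s‖) • s‖ ≤ |ρ| := by
  rcases eq_or_ne s 0 with rfl | hs
  · simp
  · rw [norm_smul, norm_div, norm_norm, Real.norm_eq_abs, div_mul_cancel₀ _ (norm_ne_zero_iff.mpr hs)]

theorem neg_real_inner_le_young {F : Type*} [NormedAddCommGroup F] [InnerProductSpace ℝ F]
    (u v : F) {lam : ℝ} (hlam : lam ≠ 0) :
    -⟪u, v⟫ ≤ 1 / (2 * lam ^ 2) * ‖u‖ ^ 2 + lam ^ 2 / 2 * ‖v‖ ^ 2 := by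
  have hyoung := two_mul_le_add_mul_sq (a := ‖u‖) (b := ‖v‖) (by positivity : 0 < (lam ^ 2)⁻¹)
  rw [inv_inv] at hyoung
  calc -⟪u, v⟫ ≤ ‖u‖ * ‖v‖ := neg_le.mp (neg_le_of_abs_le (abs_real_inner_le_norm u v))
    _ ≤ ((lam ^ 2)⁻¹ * ‖u‖ ^ 2 + lam ^ 2 * ‖v‖ ^ 2) / 2 := by linarith
    _ = _ := by ring

section Hadamard

variable {d : ℕ}

@[simp]
theorem had_apply (x y : EuclideanSpace ℝ (Fin d)) (j : Fin d) : had x y j = x j * y j := rfl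

@[simp]
theorem vsqrt_apply (x : EuclideanSpace ℝ (Fin d)) (j : Fin d) : vsqrt x j = √(x j) := rfl

theorem had_add_left (x y v : EuclideanSpace ℝ (Fin d)) : had (x + y) v = had x v + had y v := by
  ext j; simp [add_mul]

theorem had_smul_left (c : ℝ) (x v : EuclideanSpace ℝ (Fin d)) : had (c • x) v = c • had x v := by
  ext j; simp [mul_assoc]

theorem had_sum_left {ι : Type*} (s : Finset ι) (x : ι → EuclideanSpace ℝ (Fin d))
    (v : EuclideanSpace ℝ (Fin d)) : had (∑ i ∈ s, x i) v = ∑ i ∈ s, had (x i) v := by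
  ext j; simp [Finset.sum_mul]

theorem inner_had_eq_inner_had_vsqrt (x y : EuclideanSpace ℝ (Fin d)) {η : EuclideanSpace ℝ (Fin d)}
    (hη : ∀ j, 0 ≤ η j) : ⟪x, had y η⟫ = ⟪had x (vsqrt η), had y (vsqrt η)⟫ := by
  simp only [PiLp.inner_apply, had_apply, vsqrt_apply, RCLike.inner_apply, conj_trivial]
  refine Finset.sum_congr rfl fun j _ => ?_
  have := Real.mul_self_sqrt (hη j)
  linear_combination -(y j * x j) * this

theorem norm_had_vsqrt_sq_le (x : EuclideanSpace ℝ (Fin d)) {η : EuclideanSpace ℝ (Fin d)} {c : ℝ}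
    (hη : ∀ j, 0 ≤ η j ∧ η j ≤ c) : ‖had x (vsqrt η)‖ ^ 2 ≤ c * ‖x‖ ^ 2 := by
  simp only [EuclideanSpace.real_norm_sq_eq, had_apply, vsqrt_apply, mul_pow,
    Real.sq_sqrt (hη _).1, Finset.mul_sum]
  exact Finset.sum_le_sum fun j _ => by nlinarith [sq_nonneg (x j), hη j]

theorem norm_had_sq_le {x y : EuclideanSpace ℝ (Fin d)} {a b : ℝ} (hx : ∀ j, |x j| ≤ a)
    (hy : ∀ j, |y j| ≤ b) : ‖had x y‖ ^ 2 ≤ d * (a * b) ^ 2 := by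
  have hcoord : ∀ j, (x j * y j) ^ 2 ≤ (a * b) ^ 2 := fun j => by
    rw [← sq_abs, abs_mul]
    exact pow_le_pow_left₀ (by positivity)
      (mul_le_mul (hx j) (hy j) (abs_nonneg _) ((abs_nonneg _).trans (hx j))) 2
  simpa [EuclideanSpace.real_norm_sq_eq] using
    Finset.sum_le_sum fun j (_ : j ∈ Finset.univ) => hcoord j

theorem neg_inner_had_add_le {a p q η : EuclideanSpace ℝ (Fin d)} (hη : ∀ j, 0 ≤ η j)
    {lam₁ lam₂ : ℝ} (hlam₁ : lam₁ ≠ 0) (hlam₂ : lam₂ ≠ 0) :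
    -⟪a, had (p + q) η⟫ ≤ (1 / (2 * lam₁ ^ 2) + 1 / (2 * lam₂ ^ 2)) * ‖had a (vsqrt η)‖ ^ 2
      + lam₁ ^ 2 / 2 * ‖had p (vsqrt η)‖ ^ 2 + lam₂ ^ 2 / 2 * ‖had q (vsqrt η)‖ ^ 2 := by
  rw [had_add_left, inner_add_right, inner_had_eq_inner_had_vsqrt a p hη,
    inner_had_eq_inner_had_vsqrt a q hη]
  linarith [neg_real_inner_le_young (had a (vsqrt η)) (had p (vsqrt η)) hlam₁,
    neg_real_inner_le_young (had a (vsqrt η)) (had q (vsqrt η)) hlam₂]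

end Hadamard

theorem adasam_cross_term_bound_general {d N : ℕ}
    (fi : Fin N → EuclideanSpace ℝ (Fin d) → ℝ)
    (f : EuclideanSpace ℝ (Fin d) → ℝ)
    (hfdef : ∀ y, f y = (1 / (N : ℝ)) * ∑ i, fi i y)
    (L ε G β₁ γ ρ lam₁ lam₂ lam₃ : ℝ)
    (hfi : ∀ i, Differentiable ℝ (fi i))
    (hfL : ∀ u v, ‖gradient f u - gradient f v‖ ≤ L * ‖u - v‖)
    (hε : 0 < ε) (hγ : 0 ≤ γ)
    (hlam₁ : 0 < lam₁) (hlam₂ : 0 < lam₂)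
    (x s m η η₀ : EuclideanSpace ℝ (Fin d))
    (hm : ∀ j, |m j| ≤ G)
    (hη : ∀ j, 0 ≤ η j ∧ η j ≤ 1 / ε)
    (hη₀ : ∀ j, 0 ≤ η₀ j ∧ η₀ j ≤ 1 / ε)
    (z : EuclideanSpace ℝ (Fin d))
    (hz : z = x - (γ * β₁ / (1 - β₁)) • had m η₀) :
    ⟪gradient f z - gradient f x,
        -((γ / (N : ℝ)) • ∑ i, had (gradient (fi i) (x + (ρ / ‖s‖) • s)) η)⟫
      ≤ (γ ^ 3 * L ^ 2 * β₁ ^ 2 / (2 * ε * (1 - β₁) ^ 2))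
          * (1 / lam₁ ^ 2 + 1 / lam₂ ^ 2 + 1 / lam₃ ^ 2) * ((d : ℝ) * G ^ 2 / ε ^ 2)
        + (γ * lam₁ ^ 2 / 2) * ‖had (gradient f x) (vsqrt η)‖ ^ 2
        + (γ * L ^ 2 * ρ ^ 2 / (2 * ε)) * (lam₂ ^ 2 + 4 * lam₃ ^ 2) := by
  set y := x + (ρ / ‖s‖) • s
  set Δ := gradient f z - gradient f x
  set w := gradient f y - gradient f x
  set κ := γ * β₁ / (1 - β₁) with hκ
  have hgrad : ∀ u, gradient f u = (1 / (N : ℝ)) • ∑ i, gradient (fi i) u := fun u => by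
    rw [show f = _ from funext hfdef]
    exact gradient_const_mul_sum _ (fun i _ => (hfi i).differentiableAt) _
  have hdir : (γ / N) • ∑ i, had (gradient (fi i) y) η = γ • had (gradient f x + w) η := by
    rw [← had_sum_left, ← had_smul_left, add_sub_cancel, hgrad, ← had_smul_left, smul_smul,
      ← div_eq_mul_one_div]
  have hfL_sq : ∀ u v, ‖gradient f u - gradient f v‖ ^ 2 ≤ L ^ 2 * ‖u - v‖ ^ 2 := fun u v => by
    simpa [mul_pow] using pow_le_pow_left₀ (norm_nonneg _) (hfL u v) 2
  have hzx : ‖z - x‖ ^ 2 ≤ κ ^ 2 * (d * (G * (1 / ε)) ^ 2) := by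
    rw [hz, sub_sub_cancel_left, norm_neg, norm_smul, mul_pow, Real.norm_eq_abs, sq_abs]
    exact mul_le_mul_of_nonneg_left
      (norm_had_sq_le hm fun j => abs_le.mpr ⟨by linarith [hη₀ j, hε], (hη₀ j).2⟩) (sq_nonneg _)
  have hyx : ‖y - x‖ ^ 2 ≤ ρ ^ 2 := by
    rw [← sq_abs ρ, add_sub_cancel_left]
    exact pow_le_pow_left₀ (norm_nonneg _) (norm_div_norm_smul_le ρ s) 2
  have hΔ : ‖had Δ (vsqrt η)‖ ^ 2 ≤ 1 / ε * (L ^ 2 * (κ ^ 2 * (d * (G * (1 / ε)) ^ 2))) :=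
    (norm_had_vsqrt_sq_le _ hη).trans (by gcongr; exact (hfL_sq z x).trans (by gcongr))
  have hw : ‖had w (vsqrt η)‖ ^ 2 ≤ 1 / ε * (L ^ 2 * ρ ^ 2) :=
    (norm_had_vsqrt_sq_le _ hη).trans (by gcongr; exact (hfL_sq y x).trans (by gcongr))
  rw [hdir, inner_neg_right, real_inner_smul_right, ← mul_neg]
  calc _ ≤ γ * ((1 / (2 * lam₁ ^ 2) + 1 / (2 * lam₂ ^ 2)) * ‖had Δ (vsqrt η)‖ ^ 2
        + lam₁ ^ 2 / 2 * ‖had (gradient f x) (vsqrt η)‖ ^ 2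
        + lam₂ ^ 2 / 2 * ‖had w (vsqrt η)‖ ^ 2) :=
      mul_le_mul_of_nonneg_left (neg_inner_had_add_le (fun j => (hη j).1) hlam₁.ne' hlam₂.ne') hγ
    _ ≤ γ * ((1 / (2 * lam₁ ^ 2) + 1 / (2 * lam₂ ^ 2))
          * (1 / ε * (L ^ 2 * (κ ^ 2 * (d * (G * (1 / ε)) ^ 2))))
        + lam₁ ^ 2 / 2 * ‖had (gradient f x) (vsqrt η)‖ ^ 2
        + lam₂ ^ 2 / 2 * (1 / ε * (L ^ 2 * ρ ^ 2))) := by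
      gcongr
    _ ≤ _ := by
      have hslack : 0 ≤ γ ^ 3 * L ^ 2 * β₁ ^ 2 / (2 * ε * (1 - β₁) ^ 2) * (1 / lam₃ ^ 2)
          * (d * G ^ 2 / ε ^ 2) + γ * L ^ 2 * ρ ^ 2 / (2 * ε) * (4 * lam₃ ^ 2) := by positivity
      rw [hκ]
      -- `ring` cannot split `(2 * ε * (1 - β₁) ^ 2)⁻¹` unless `1 - β₁` is an atom
      generalize 1 - β₁ = t at hslack ⊢
      linear_combination hslack

/-- Full-batch momentum cross-term bound of the AdaSAM analysis: with `f = (1/N) Σ f_i`,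
`∇f_i` and `∇f` `L`-Lipschitz, `‖m‖∞ ≤ G`, `η, η₀` coordinatewise in `[0, 1/ε]`, and
`z = x − (γβ₁/(1−β₁)) m ⊙ η₀`, one has
`⟨∇f(z) − ∇f(x), −(γ/N) Σ_i ∇f_i(x + ρs/‖s‖) ⊙ η⟩
  ≤ (γ³L²β₁²/(2ε(1−β₁)²))(1/λ₁² + 1/λ₂² + 1/λ₃²)(dG²/ε²)
    + (γλ₁²/2)‖∇f(x) ⊙ √η‖² + (γL²ρ²/(2ε))(λ₂² + 4λ₃²)`. -/
theorem adasam_cross_term_bound {d N : ℕ} (hd : 1 ≤ d) (hN : 1 ≤ N)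
    (fi : Fin N → EuclideanSpace ℝ (Fin d) → ℝ)
    (f : EuclideanSpace ℝ (Fin d) → ℝ)
    (hfdef : ∀ y, f y = (1 / (N : ℝ)) * ∑ i, fi i y)
    (L ε G β₁ γ ρ lam₁ lam₂ lam₃ : ℝ)
    (hf : Differentiable ℝ f)
    (hfi : ∀ i, Differentiable ℝ (fi i))
    (hfiL : ∀ i, ∀ u v, ‖gradient (fi i) u - gradient (fi i) v‖ ≤ L * ‖u - v‖)
    (hfL : ∀ u v, ‖gradient f u - gradient f v‖ ≤ L * ‖u - v‖)
    (hε : 0 < ε) (hG : 0 ≤ G) (hβ₁ : β₁ ∈ Set.Ico (0 : ℝ) 1) (hγ : 0 ≤ γ) (hρ : 0 ≤ ρ)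
    (hlam₁ : 0 < lam₁) (hlam₂ : 0 < lam₂) (hlam₃ : 0 < lam₃)
    (x s m η η₀ : EuclideanSpace ℝ (Fin d))
    (hs : s ≠ 0) (hx : gradient f x ≠ 0)
    (hm : ∀ j, |m j| ≤ G)
    (hη : ∀ j, 0 ≤ η j ∧ η j ≤ 1 / ε)
    (hη₀ : ∀ j, 0 ≤ η₀ j ∧ η₀ j ≤ 1 / ε)
    (z : EuclideanSpace ℝ (Fin d))
    (hz : z = x - (γ * β₁ / (1 - β₁)) • had m η₀) :
    ⟪gradient f z - gradient f x,
        -((γ / (N : ℝ)) • ∑ i, had (gradient (fi i) (x + (ρ / ‖s‖) • s)) η)⟫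
      ≤ (γ ^ 3 * L ^ 2 * β₁ ^ 2 / (2 * ε * (1 - β₁) ^ 2))
          * (1 / lam₁ ^ 2 + 1 / lam₂ ^ 2 + 1 / lam₃ ^ 2) * ((d : ℝ) * G ^ 2 / ε ^ 2)
        + (γ * lam₁ ^ 2 / 2) * ‖had (gradient f x) (vsqrt η)‖ ^ 2
        + (γ * L ^ 2 * ρ ^ 2 / (2 * ε)) * (lam₂ ^ 2 + 4 * lam₃ ^ 2) :=
  adasam_cross_term_bound_general fi f hfdef L ε G β₁ γ ρ lam₁ lam₂ lam₃ hfi hfL hε hγ hlam₁ hlam₂ x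
    s m η η₀ hm hη hη₀ z hz
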